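/- Define the Lie algebra L over GF(2) generated by a, b, c subject to: the ideal generated by c is abelian, [b,c] = 0, and [[u,x],u] = 0 for all x ∈ L and u ∈ {a,b,c}. Then L is not nilpotent; it has basis a, b, [a,b], c·(ab)^n for n ≥ 0, and c·(ab)^n·a for n ≥ 0 (left-normed products), so in particular L is infinite-dimensional. -/

import Mathlib

/-!
Realise the algebra inside the associative algebra of `3 × 3` matrices over `GF(2)[X]`, so that
the Jacobi identity is free. With matrix units `Eᵢⱼ`, put `a = E₁₀`, `b = X E₀₁`, `c = E₀₂`; this
is the semidirect product of the Heisenberg algebra `⟨a, b, [a,b]⟩` with `GF(2)[X]²` (the last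
column). Then `[a,b] = X (E₀₀ + E₁₁)` acts on the last column as multiplication by `X`, so
`c(ab)ⁿ = Xⁿ E₀₂` and `c(ab)ⁿa = Xⁿ E₁₂`: these never vanish, and together with `a, b, [a,b]`
they are visibly independent and closed under brackets.

Since `a² = b² = c² = 0`, the identity `[[u,x],u] = 2uxu - u²x - xu²` gives the sandwich
conditions in characteristic `2`. Every element of the algebra has zero last row, so `c` kills it
from the left; hence the ideal generated by `c` lies in the left annihilator of the algebra, on
which all products, and so all brackets, vanish.
-/

/-- Iterated right bracketing: `adn x y n = [x, y, y, ..., y]` (`y` repeated `n` times). -/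
def adn {L : Type*} [LieRing L] (x y : L) : ℕ → L
  | 0 => x
  | n + 1 => ⁅adn x y n, y⁆

open Polynomial Matrix Submodule

attribute [local instance] LieRing.ofAssociativeRing

section Associative

variable {A : Type*} [Ring A]

lemma lie_comm_of_charTwo [CharP A 2] (x y : A) : ⁅x, y⁆ = ⁅y, x⁆ := by
  rw [Ring.lie_def, Ring.lie_def, CharTwo.sub_eq_add, CharTwo.sub_eq_add, add_comm]

lemma lie_lie_self_eq_zero_of_mul_self_eq_zero [CharP A 2] {u : A} (hu : u * u = 0) (x : A) :
    ⁅⁅u, x⁆, u⁆ = 0 := by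
  calc ⁅⁅u, x⁆, u⁆ = 2 * (u * x * u) - x * (u * u) - (u * u) * x := by
        simp only [Ring.lie_def]; noncomm_ring
    _ = 0 := by simp [hu, CharTwo.two_eq_zero]

variable {R : Type*} [CommRing R] [Algebra R A]

variable (R) in
def rightAnnihilatorLieSubalgebra (c : A) : LieSubalgebra R A where
  carrier := {y | c * y = 0}
  add_mem' hx hy := by simp_all [mul_add]
  zero_mem' := mul_zero c
  smul_mem' r x hx := by simp_all
  lie_mem' {x y} hx hy := by
    simp_all [Ring.lie_def, mul_sub, ← mul_assoc]

def leftAnnihilatorLieIdeal (K : LieSubalgebra R A) : LieIdeal R K where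
  carrier := {x | ∀ y : K, (x : A) * y = 0}
  add_mem' hx hy y := by simp_all [add_mul]
  zero_mem' y := zero_mul _
  smul_mem' r x hx y := by simp_all
  lie_mem {z x} hx y := by
    have hx : ∀ y : K, (x : A) * y = 0 := hx
    rw [LieSubalgebra.coe_bracket, Ring.lie_def, sub_mul, hx z, zero_mul,
      mul_assoc, hx y, mul_zero, sub_zero]

lemma lie_eq_zero_of_mem_lieSpan_of_mul_eq_zero {K : LieSubalgebra R A} {c : K}
    (hc : ∀ y : K, (c : A) * y = 0) {x y : K} (hx : x ∈ LieSubmodule.lieSpan R K {c})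
    (hy : y ∈ LieSubmodule.lieSpan R K {c}) : ⁅x, y⁆ = 0 := by
  have hle : LieSubmodule.lieSpan R K {c} ≤ leftAnnihilatorLieIdeal K :=
    LieSubmodule.lieSpan_le.mpr (Set.singleton_subset_iff.mpr hc)
  have hx' : ∀ z : K, (x : A) * z = 0 := hle hx
  have hy' : ∀ z : K, (y : A) * z = 0 := hle hy
  ext
  simp [Ring.lie_def, hx', hy']

end Associative

section LieSpan

variable {R L ι : Type*} [CommRing R] [LieRing L] [LieAlgebra R L]

lemma lie_mem_span_of_forall_lie_mem {s : Set L} (hs : ∀ x ∈ s, ∀ y ∈ s, ⁅x, y⁆ ∈ span R s)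
    {x y : L} (hx : x ∈ span R s) (hy : y ∈ span R s) : ⁅x, y⁆ ∈ span R s := by
  induction hx, hy using span_induction₂ with
  | mem_mem x y hx hy => exact hs x hx y hy
  | zero_left y hy => simp
  | zero_right x hx => simp
  | add_left x y z _ _ _ hx hy => simpa using add_mem hx hy
  | add_right x y z _ _ _ hx hy => simpa using add_mem hx hy
  | smul_left r x y _ _ h => simpa using smul_mem _ r h
  | smul_right r x y _ _ h => simpa using smul_mem _ r h

lemma LieSubalgebra.coe_lieSpan_eq_span_of_forall_lie_mem {s : Set L}
    (hs : ∀ x ∈ s, ∀ y ∈ s, ⁅x, y⁆ ∈ span R s) : (lieSpan R L s : Submodule R L) = span R s := by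
  refine le_antisymm ?_ submodule_span_le_lieSpan
  change _ ≤ ({ span R s with lie_mem' := lie_mem_span_of_forall_lie_mem hs } : LieSubalgebra R L)
  exact lieSpan_le.mpr subset_span

lemma LieSubalgebra.span_range_eq_top_of_span_coe_eq {K : LieSubalgebra R L} (F : ι → K)
    (h : span R (Set.range fun i ↦ (F i : L)) = K) : span R (Set.range F) = ⊤ := by
  apply map_injective_of_injective (f := (K.incl : K →ₗ[R] L)) Subtype.val_injective
  rw [map_span, ← Set.range_comp, Submodule.map_top]
  refine h.trans ?_
  ext x
  simp

end LieSpan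

lemma LieRing.not_isNilpotent_of_lie_eq {L : Type*} [LieRing L] (z : L) (x : ℕ → L)
    (hx : ∀ k, ⁅z, x k⁆ = x (k + 1)) (hne : ∀ k, x k ≠ 0) : ¬ LieRing.IsNilpotent L := by
  intro h
  obtain ⟨k, hk⟩ := LieAlgebra.nilpotent_ad_of_nilpotent_algebra ℤ L
  have hpow : ∀ n, (LieAlgebra.ad ℤ L z ^ n) (x 0) = x n := by
    intro n
    induction n with
    | zero => rfl
    | succ n ih => rw [pow_succ', Module.End.mul_apply, ih, LieAlgebra.ad_apply, hx]
  exact hne k (by rw [← hpow, hk z, LinearMap.zero_apply])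

namespace SandwichExample

noncomputable section

abbrev A := Matrix (Fin 3) (Fin 3) (ZMod 2)[X]

def a : A := single 1 0 1
def b : A := single 0 1 X
def ab : A := single 0 0 X + single 1 1 X
def c (n : ℕ) : A := single 0 2 (X ^ n)
def ca (n : ℕ) : A := single 1 2 (X ^ n)

section Table

attribute [local simp] Ring.lie_def CharTwo.sub_eq_add single_mul_single_same
  single_mul_single_of_ne add_mul mul_add

@[simp] lemma lie_a_b : ⁅a, b⁆ = ab := by simp [a, b, ab, add_comm]
@[simp] lemma lie_a_ab : ⁅a, ab⁆ = 0 := by simp [a, ab]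
@[simp] lemma lie_b_ab : ⁅b, ab⁆ = 0 := by simp [b, ab]
@[simp] lemma lie_c_a (n : ℕ) : ⁅c n, a⁆ = ca n := by simp [a, c, ca]
@[simp] lemma lie_c_b (n : ℕ) : ⁅c n, b⁆ = 0 := by simp [b, c]
@[simp] lemma lie_c_ab (n : ℕ) : ⁅c n, ab⁆ = c (n + 1) := by simp [ab, c, pow_succ']
@[simp] lemma lie_ca_a (n : ℕ) : ⁅ca n, a⁆ = 0 := by simp [a, ca]
@[simp] lemma lie_ca_b (n : ℕ) : ⁅ca n, b⁆ = c (n + 1) := by simp [b, c, ca, pow_succ']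
@[simp] lemma lie_ca_ab (n : ℕ) : ⁅ca n, ab⁆ = ca (n + 1) := by simp [ab, ca, pow_succ']
@[simp] lemma lie_c_c (n k : ℕ) : ⁅c n, c k⁆ = 0 := by simp [c]
@[simp] lemma lie_c_ca (n k : ℕ) : ⁅c n, ca k⁆ = 0 := by simp [c, ca]
@[simp] lemma lie_ca_ca (n k : ℕ) : ⁅ca n, ca k⁆ = 0 := by simp [ca]

end Table

lemma a_mul_self : a * a = 0 := by simp [a]
lemma b_mul_self : b * b = 0 := by simp [b]
lemma c_zero_mul_self : c 0 * c 0 = 0 := by simp [c]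

def e : Fin 3 ⊕ ℕ ⊕ ℕ → A := Sum.elim ![a, b, ab] (Sum.elim c ca)

lemma lie_e_mem_span (i j : Fin 3 ⊕ ℕ ⊕ ℕ) : ⁅e i, e j⁆ ∈ span (ZMod 2) (Set.range e) := by
  have he : ∀ k, e k ∈ span (ZMod 2) (Set.range e) := fun k ↦ subset_span ⟨k, rfl⟩
  have hab : ab ∈ span (ZMod 2) (Set.range e) := he (.inl 2)
  have hc : ∀ n, c n ∈ span (ZMod 2) (Set.range e) := fun n ↦ he (.inr (.inl n))
  have hca : ∀ n, ca n ∈ span (ZMod 2) (Set.range e) := fun n ↦ he (.inr (.inr n))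
  -- keeps `simp` below from unfolding `Set.range e`
  generalize span (ZMod 2) (Set.range e) = S at *
  rcases i with i | n | n <;> rcases j with j | k | k <;> (try fin_cases i) <;> (try fin_cases j) <;>
    simp [e, hab, hc, hca] <;> rw [lie_comm_of_charTwo] <;> simp [hab, hc, hca]

lemma c_ne_zero (n : ℕ) : c n ≠ 0 :=
  fun h ↦ by simpa [c] using congr_fun₂ h 0 2

def L : LieSubalgebra (ZMod 2) A := LieSubalgebra.lieSpan (ZMod 2) A {a, b, c 0}

lemma e_mem_L (i : Fin 3 ⊕ ℕ ⊕ ℕ) : e i ∈ L := by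
  have ha : a ∈ L := LieSubalgebra.subset_lieSpan (by simp)
  have hb : b ∈ L := LieSubalgebra.subset_lieSpan (by simp)
  have hab : ab ∈ L := lie_a_b ▸ L.lie_mem ha hb
  have hc : ∀ n, c n ∈ L := by
    intro n
    induction n with
    | zero => exact LieSubalgebra.subset_lieSpan (by simp)
    | succ n ih => exact lie_c_ab n ▸ L.lie_mem ih hab
  rcases i with i | n | n
  · fin_cases i
    exacts [ha, hb, hab]
  · exact hc n
  · exact (lie_c_a n ▸ L.lie_mem (hc n) ha : ca n ∈ L)

lemma coe_L_eq_span : (L : Submodule (ZMod 2) A) = span (ZMod 2) (Set.range e) := by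
  have hL : L = LieSubalgebra.lieSpan (ZMod 2) A (Set.range e) := by
    refine le_antisymm (LieSubalgebra.lieSpan_mono ?_)
      (LieSubalgebra.lieSpan_le.mpr (Set.range_subset_iff.mpr e_mem_L))
    rintro _ (rfl | rfl | rfl)
    exacts [⟨.inl 0, rfl⟩, ⟨.inl 1, rfl⟩, ⟨.inr (.inl 0), rfl⟩]
  rw [hL, LieSubalgebra.coe_lieSpan_eq_span_of_forall_lie_mem]
  rintro _ ⟨i, rfl⟩ _ ⟨j, rfl⟩
  exact lie_e_mem_span i j

def entryCoeff (i j : Fin 3) (n : ℕ) : A →ₗ[ZMod 2] ZMod 2 :=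
  (lcoeff (ZMod 2) n).comp (entryLinearMap (ZMod 2) (ZMod 2)[X] i j)

def coeffs : A →ₗ[ZMod 2] (Fin 3 ⊕ ℕ ⊕ ℕ → ZMod 2) :=
  LinearMap.pi (Sum.elim ![entryCoeff 1 0 0, entryCoeff 0 1 1, entryCoeff 0 0 1]
    (Sum.elim (entryCoeff 0 2) (entryCoeff 1 2)))

lemma coeffs_e (i : Fin 3 ⊕ ℕ ⊕ ℕ) : coeffs (e i) = Pi.single i 1 := by
  ext j
  rcases i with i | n | n <;> rcases j with j | k | k <;> (try fin_cases i) <;> (try fin_cases j) <;>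
    simp [coeffs, entryCoeff, e, a, b, ab, c, ca, coeff_X, coeff_X_pow, Pi.single_apply]

lemma linearIndependent_e : LinearIndependent (ZMod 2) e :=
  LinearIndependent.of_comp coeffs <| by
    simpa only [Function.comp_def, coeffs_e] using Pi.linearIndependent_single_one _ (ZMod 2)

def E (i : Fin 3 ⊕ ℕ ⊕ ℕ) : L := ⟨e i, e_mem_L i⟩

lemma linearIndependent_E : LinearIndependent (ZMod 2) E :=
  LinearIndependent.of_comp (L.incl : L →ₗ[ZMod 2] A) linearIndependent_e

lemma span_range_E : span (ZMod 2) (Set.range E) = ⊤ :=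
  LieSubalgebra.span_range_eq_top_of_span_coe_eq E coe_L_eq_span.symm

lemma lieSpan_generators_eq_top :
    LieSubalgebra.lieSpan (ZMod 2) L {E (.inl 0), E (.inl 1), E (.inr (.inl 0))} = ⊤ := by
  have h : LieSubalgebra.lieSpan (ZMod 2) L (Subtype.val ⁻¹' {a, b, c 0}) = ⊤ :=
    LieSubalgebra.lieSpan_lieSpan_coe_preimage
  rw [← h]
  congr 1
  ext x
  simp [E, e, Subtype.ext_iff]

lemma lie_E_a_b : ⁅E (.inl 0), E (.inl 1)⁆ = E (.inl 2) := Subtype.ext lie_a_b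

lemma lie_E_b_c : ⁅E (.inl 1), E (.inr (.inl 0))⁆ = 0 :=
  Subtype.ext <| (lie_comm_of_charTwo _ _).trans (lie_c_b 0)

lemma adn_E (n : ℕ) : adn (E (.inr (.inl 0))) (E (.inl 2)) n = E (.inr (.inl n)) := by
  induction n with
  | zero => rfl
  | succ n ih => rw [adn, ih]; exact Subtype.ext (lie_c_ab n)

lemma lie_E_c_a (n : ℕ) : ⁅E (.inr (.inl n)), E (.inl 0)⁆ = E (.inr (.inr n)) :=
  Subtype.ext (lie_c_a n)

lemma lie_lie_E_self (i : Fin 3 ⊕ ℕ ⊕ ℕ) (h : e i * e i = 0) (x : L) : ⁅⁅E i, x⁆, E i⁆ = 0 :=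
  Subtype.ext (lie_lie_self_eq_zero_of_mul_self_eq_zero h x)

lemma c_zero_mul_eq_zero (y : L) : c 0 * y = 0 := by
  have hL : L ≤ rightAnnihilatorLieSubalgebra (ZMod 2) (c 0) := by
    refine LieSubalgebra.lieSpan_le.mpr ?_
    rintro _ (rfl | rfl | rfl) <;> simp [rightAnnihilatorLieSubalgebra, a, b, c]
  exact hL y.2

lemma not_isNilpotent_L : ¬ LieRing.IsNilpotent L :=
  LieRing.not_isNilpotent_of_lie_eq (E (.inl 2)) (fun k ↦ E (.inr (.inl k)))
    (fun k ↦ Subtype.ext <| (lie_comm_of_charTwo _ _).trans (lie_c_ab k))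
    (fun k h ↦ c_ne_zero k (congrArg Subtype.val h))

end

end SandwichExample

open SandwichExample

/-- The Example of Section 1.2: there is a Lie algebra `L` over `GF(2)` generated by
`a, b, c` with the ideal generated by `c` abelian, `[b,c] = 0` and each of `a, b, c`
satisfying the first sandwich condition, such that `a`, `b`, `[a,b]`, `c(ab)ⁿ` (n ≥ 0)
and `c(ab)ⁿa` (n ≥ 0) form a basis of `L`; in particular `L` is infinite-dimensional
and not nilpotent. -/
theorem stmt16 :
    ∃ (L : Type) (_ : LieRing L) (_ : LieAlgebra (ZMod 2) L) (a b c : L),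
      LieSubalgebra.lieSpan (ZMod 2) L {a, b, c} = ⊤ ∧
      (∀ x ∈ LieSubmodule.lieSpan (ZMod 2) L ({c} : Set L),
        ∀ y ∈ LieSubmodule.lieSpan (ZMod 2) L ({c} : Set L), ⁅x, y⁆ = 0) ∧
      ⁅b, c⁆ = 0 ∧
      (∀ x : L, ⁅⁅a, x⁆, a⁆ = 0) ∧ (∀ x : L, ⁅⁅b, x⁆, b⁆ = 0) ∧
      (∀ x : L, ⁅⁅c, x⁆, c⁆ = 0) ∧
      (∃ F : Fin 3 ⊕ ℕ ⊕ ℕ → L,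
        F (Sum.inl 0) = a ∧ F (Sum.inl 1) = b ∧ F (Sum.inl 2) = ⁅a, b⁆ ∧
        (∀ n : ℕ, F (Sum.inr (Sum.inl n)) = adn c ⁅a, b⁆ n) ∧
        (∀ n : ℕ, F (Sum.inr (Sum.inr n)) = ⁅adn c ⁅a, b⁆ n, a⁆) ∧
        LinearIndependent (ZMod 2) F ∧
        Submodule.span (ZMod 2) (Set.range F) = ⊤) ∧
      ¬ Module.Finite (ZMod 2) L ∧
      ¬ LieRing.IsNilpotent L := by
  refine ⟨L, inferInstance, inferInstance, E (.inl 0), E (.inl 1), E (.inr (.inl 0)),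
    lieSpan_generators_eq_top, fun x hx y hy ↦ ?_, lie_E_b_c, lie_lie_E_self _ a_mul_self,
    lie_lie_E_self _ b_mul_self, lie_lie_E_self _ c_zero_mul_self,
    ⟨E, rfl, rfl, lie_E_a_b.symm, fun n ↦ ?_, fun n ↦ ?_, linearIndependent_E, span_range_E⟩,
    fun _ ↦ Module.Finite.not_linearIndependent_of_infinite E linearIndependent_E,
    not_isNilpotent_L⟩
  · exact lie_eq_zero_of_mem_lieSpan_of_mul_eq_zero (c := E (.inr (.inl 0))) c_zero_mul_eq_zero hx hy
  · rw [lie_E_a_b, adn_E]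
  · rw [lie_E_a_b, adn_E, lie_E_c_a]
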